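/- arXiv:0704.1747 — 2 statements merged into one kernel-verified Lean document; each statement's English description precedes it below -/
import Mathlib

section
/- Let n ≥ 2 and d ≥ 1, and let V ⊆ (ℂ^×)^n be the common zero set of a finite family of polynomials in ℂ[X_1,…,X_n], each of total degree at most d. Suppose t ∈ ℕ satisfies Σ_{i=0}^{n−1} T^n_i(f) ≤ t for every f ∈ ℂ[X_1,…,X_n] of total degree at most d, and suppose N ∈ ℕ satisfies: for every finite family of polynomials in ℂ[X_1,…,X_{n−1}] of total degree at most n^{2+n}·d², the common zero set of that family in (ℂ^×)^{n−1} contains at most N maximal torsion cosets. Then V contains at most t·N maximal torsion cosets. -/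
/-!
For a family `f₀, …, f_{m-1}` cutting out `V`, consider `g_c = ∑ cⁱ fᵢ`. A point outside `V`
lies on `H(g_c)` for only finitely many `c`, since `c ↦ g_c(x)` is a nonzero polynomial. As
there are only countably many torsion cosets, some `c ∈ ℂ` makes every torsion coset in
`H(g_c)` lie in `V`; then `V` and `H(g_c)` have the same maximal torsion cosets. When `V` is not
the whole torus these have dimension `< n`, so there are at most `∑_{i<n} T^n_i(g_c) ≤ t` of them.
When `V` is the whole torus it is its own unique maximal torsion coset, and `t, N ≥ 1` (witnessed
by `H(X₀ - 1)` and by the empty family).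
-/

open scoped BigOperators

noncomputable section

/-- `x ^ a` coordinatewise: `∏ j, x j ^ a j`. -/
def vpow {n : ℕ} (x : Fin n → ℂˣ) (a : Fin n → ℤ) : ℂˣ := ∏ j, x j ^ a j

/-- A torsion point: every coordinate is a root of unity. -/
def IsTorsionPoint {n : ℕ} (x : Fin n → ℂˣ) : Prop := ∀ j, ∃ m : ℕ, 0 < m ∧ x j ^ m = 1

/-- A primitive subgroup of `ℤ^n`: the quotient is torsion-free. -/
def IsPrimitiveLattice {n : ℕ} (A : Submodule ℤ (Fin n → ℤ)) : Prop :=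
  ∀ (v : Fin n → ℤ) (k : ℤ), k ≠ 0 → k • v ∈ A → v ∈ A

/-- `H_A = {x | x^a = 1 for all a ∈ A}`. -/
def subgroupH {n : ℕ} (A : Submodule ℤ (Fin n → ℤ)) : Set (Fin n → ℂˣ) :=
  {x | ∀ a ∈ A, vpow x a = 1}

/-- `C` is the torsion coset `ω · H_A`. -/
def IsTorsionCosetWith {n : ℕ} (ω : Fin n → ℂˣ) (A : Submodule ℤ (Fin n → ℤ))
    (C : Set (Fin n → ℂˣ)) : Prop :=
  IsTorsionPoint ω ∧ IsPrimitiveLattice A ∧ C = (fun h => ω * h) '' subgroupH A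

def IsTorsionCoset {n : ℕ} (C : Set (Fin n → ℂˣ)) : Prop :=
  ∃ ω A, IsTorsionCosetWith ω A C

/-- A torsion coset of dimension `i` (that is, `i = n - rank A`). -/
def IsTorsionCosetOfDim {n : ℕ} (i : ℕ) (C : Set (Fin n → ℂˣ)) : Prop :=
  ∃ ω A, IsTorsionCosetWith ω A C ∧ i = n - Module.finrank ℤ A

/-- `C` is a maximal torsion coset contained in `V`. -/
def IsMaximalTorsionCoset {n : ℕ} (V C : Set (Fin n → ℂˣ)) : Prop :=
  IsTorsionCoset C ∧ C ⊆ V ∧ ∀ C', IsTorsionCoset C' → C' ⊆ V → C ⊆ C' → C' = C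

def maximalTorsionCosets {n : ℕ} (V : Set (Fin n → ℂˣ)) : Set (Set (Fin n → ℂˣ)) :=
  {C | IsMaximalTorsionCoset V C}

/-- The hypersurface `H(f)` in `(ℂˣ)^n`. -/
def hyp {n : ℕ} (f : MvPolynomial (Fin n) ℂ) : Set (Fin n → ℂˣ) :=
  {x | MvPolynomial.eval (fun j => (x j : ℂ)) f = 0}

/-- `T n i f`: the number of `i`-dimensional maximal torsion cosets on `H(f)` in `(ℂˣ)^n`. -/
def T (n : ℕ) (i : ℕ) (f : MvPolynomial (Fin n) ℂ) : ℕ :=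
  Set.ncard {C | IsMaximalTorsionCoset (hyp f) C ∧ IsTorsionCosetOfDim i C}

/-- The exponent lattice `L(f)` of a polynomial `f`. -/
def expLattice {n : ℕ} (f : MvPolynomial (Fin n) ℂ) : Submodule ℤ (Fin n → ℤ) :=
  Submodule.span ℤ
    {w | ∃ u ∈ f.support, ∃ v ∈ f.support, w = fun j => (u j : ℤ) - (v j : ℤ)}

section TorsionCosets

variable {n : ℕ}

lemma vpow_smul (x : Fin n → ℂˣ) (c : ℤ) (a : Fin n → ℤ) : vpow x (c • a) = vpow x a ^ c := by
  simp [vpow, ← Finset.prod_zpow, ← zpow_mul, mul_comm]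

lemma vpow_single (x : Fin n → ℂˣ) (i : Fin n) (c : ℤ) : vpow x (Pi.single i c) = x i ^ c := by
  rw [vpow, Finset.prod_eq_single i (fun j _ hj => by simp [hj]) (by simp)]
  simp

lemma subgroupH_span_singleton (a : Fin n → ℤ) :
    subgroupH (ℤ ∙ a) = {x | vpow x a = 1} := by
  ext x
  refine ⟨fun hx => hx a (Submodule.mem_span_singleton_self a), fun hx b hb => ?_⟩
  obtain ⟨c, rfl⟩ := Submodule.mem_span_singleton.mp hb
  rw [vpow_smul, hx.out, one_zpow]

lemma subgroupH_bot : subgroupH (⊥ : Submodule ℤ (Fin n → ℤ)) = Set.univ := by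
  ext x
  simp [subgroupH, vpow]

lemma isPrimitiveLattice_bot : IsPrimitiveLattice (⊥ : Submodule ℤ (Fin n → ℤ)) := by
  intro v k hk hkv
  rw [Submodule.mem_bot] at hkv ⊢
  exact (smul_eq_zero.mp hkv).resolve_left hk

lemma isPrimitiveLattice_span_single (i : Fin n) :
    IsPrimitiveLattice (ℤ ∙ (Pi.single i 1 : Fin n → ℤ)) := by
  intro v k hk hkv
  obtain ⟨c, hc⟩ := Submodule.mem_span_singleton.mp hkv
  refine Submodule.mem_span_singleton.mpr ⟨v i, funext fun j => ?_⟩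
  rcases eq_or_ne j i with rfl | hj
  · simp
  · have hvj : k * v j = 0 := by simpa [hj] using (congrFun hc j).symm
    simp [hj, (mul_eq_zero.mp hvj).resolve_left hk]

lemma isTorsionPoint_one : IsTorsionPoint (1 : Fin n → ℂˣ) :=
  fun _ => ⟨1, one_pos, one_pow 1⟩

lemma isTorsionCoset_subgroupH {A : Submodule ℤ (Fin n → ℤ)} (hA : IsPrimitiveLattice A) :
    IsTorsionCoset (subgroupH A) :=
  ⟨1, A, isTorsionPoint_one, hA, by simp⟩

lemma isTorsionCoset_univ : IsTorsionCoset (Set.univ : Set (Fin n → ℂˣ)) :=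
  subgroupH_bot ▸ isTorsionCoset_subgroupH isPrimitiveLattice_bot

lemma IsTorsionCosetWith.eq_univ_of_bot {ω : Fin n → ℂˣ} {C : Set (Fin n → ℂˣ)}
    (hC : IsTorsionCosetWith ω ⊥ C) : C = Set.univ := by
  rw [hC.2.2, subgroupH_bot, Set.image_univ_of_surjective]
  exact fun y => ⟨ω⁻¹ * y, mul_inv_cancel_left ω y⟩

lemma maximalTorsionCosets_of_isTorsionCoset {V : Set (Fin n → ℂˣ)} (hV : IsTorsionCoset V) :
    maximalTorsionCosets V = {V} := by
  ext C
  refine ⟨fun ⟨_, hCV, hmax⟩ => (hmax V hV subset_rfl hCV).symm, ?_⟩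
  rintro rfl
  exact ⟨hV, subset_rfl, fun C' _ hC'V hVC' => hC'V.antisymm hVC'⟩

lemma maximalTorsionCosets_univ :
    maximalTorsionCosets (Set.univ : Set (Fin n → ℂˣ)) = {Set.univ} :=
  maximalTorsionCosets_of_isTorsionCoset isTorsionCoset_univ

lemma isMaximalTorsionCoset_iff_of_subset {V W C : Set (Fin n → ℂˣ)} (hVW : V ⊆ W)
    (hWV : ∀ C', IsTorsionCoset C' → C' ⊆ W → C' ⊆ V) :
    IsMaximalTorsionCoset V C ↔ IsMaximalTorsionCoset W C :=
  ⟨fun ⟨hC, hCV, hmax⟩ => ⟨hC, hCV.trans hVW, fun C' h h' => hmax C' h (hWV C' h h')⟩,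
    fun ⟨hC, hCW, hmax⟩ => ⟨hC, hWV C hC hCW, fun C' h h' => hmax C' h (h'.trans hVW)⟩⟩

lemma IsMaximalTorsionCoset.exists_dim_lt {V C : Set (Fin n → ℂˣ)}
    (hC : IsMaximalTorsionCoset V C) (hV : V ≠ Set.univ) :
    ∃ i < n, IsTorsionCosetOfDim i C := by
  obtain ⟨ω, A, hωA⟩ := hC.1
  have hA : A ≠ ⊥ := by
    rintro rfl
    exact hV (Set.univ_subset_iff.mp (hωA.eq_univ_of_bot ▸ hC.2.1))
  have hpos : 0 < Module.finrank ℤ A := Nat.pos_of_ne_zero (Submodule.finrank_eq_zero.not.mpr hA)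
  have hle : Module.finrank ℤ A ≤ n := (Submodule.finrank_le A).trans_eq (Module.finrank_fin_fun ℤ)
  exact ⟨n - Module.finrank ℤ A, by omega, ω, A, hωA, rfl⟩

lemma ncard_maximalTorsionCosets_le_sum {V : Set (Fin n → ℂˣ)} (hV : V ≠ Set.univ) :
    (maximalTorsionCosets V).ncard ≤
      ∑ i ∈ Finset.range n, {C | IsMaximalTorsionCoset V C ∧ IsTorsionCosetOfDim i C}.ncard := by
  have hcover : maximalTorsionCosets V =
      ⋃ i ∈ (Finset.range n : Set ℕ),
        {C | IsMaximalTorsionCoset V C ∧ IsTorsionCosetOfDim i C} := by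
    ext C
    simp only [Set.mem_iUnion, Finset.coe_range, Set.mem_Iio, Set.mem_ofPred_eq, exists_prop]
    refine ⟨fun hC => ?_, fun ⟨_, _, hC, _⟩ => hC⟩
    obtain ⟨i, hi, hCi⟩ := hC.exists_dim_lt hV
    exact ⟨i, hi, hC, hCi⟩
  rw [hcover, ← finsum_mem_coe_finset]
  exact (Finset.finite_toSet _).ncard_biUnion_le _

end TorsionCosets

section Countability

lemma countable_setOf_isOfFinOrder_units : {u : ℂˣ | IsOfFinOrder u}.Countable := by
  have hfin (m : ℕ) : (rootsOfUnity (m + 1) ℂ : Set ℂˣ).Finite :=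
    Set.finite_coe_iff.mp (inferInstanceAs (Finite (rootsOfUnity (m + 1) ℂ)))
  refine Set.Countable.mono (fun u hu => ?_) (Set.countable_iUnion fun m => (hfin m).countable)
  obtain ⟨m, hm, hum⟩ := isOfFinOrder_iff_pow_eq_one.mp hu
  exact Set.mem_iUnion.mpr ⟨m - 1, (mem_rootsOfUnity _ u).mpr (by rwa [Nat.sub_add_cancel hm])⟩

lemma countable_setOf_isTorsionPoint (n : ℕ) :
    {x : Fin n → ℂˣ | IsTorsionPoint x}.Countable := by
  refine Set.Countable.mono (fun x hx => ?_)
    (Set.countable_pi fun _ => countable_setOf_isOfFinOrder_units)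
  exact fun j => isOfFinOrder_iff_pow_eq_one.mpr (hx j)

lemma Submodule.countable_of_isNoetherian (R M : Type*) [Semiring R] [AddCommMonoid M] [Module R M]
    [IsNoetherian R M] [Countable M] : Countable (Submodule R M) :=
  Function.Surjective.countable (f := fun t : Finset M => Submodule.span R (t : Set M))
    fun A => IsNoetherian.noetherian A

lemma countable_setOf_isTorsionCoset (n : ℕ) :
    {C : Set (Fin n → ℂˣ) | IsTorsionCoset C}.Countable := by
  have := Submodule.countable_of_isNoetherian ℤ (Fin n → ℤ)
  refine Set.Countable.mono ?_ (((countable_setOf_isTorsionPoint n).prod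
    (Set.countable_univ (α := Submodule ℤ _))).image fun p => (fun h => p.1 * h) '' subgroupH p.2)
  rintro C ⟨ω, A, hω, -, rfl⟩
  exact ⟨(ω, A), ⟨hω, trivial⟩, rfl⟩

end Countability

section GenericCombination

open MvPolynomial

def powCombination {σ R : Type*} [CommSemiring R] {m : ℕ} (e : Fin m → MvPolynomial σ R) (c : R) :
    MvPolynomial σ R :=
  ∑ i : Fin m, c ^ (i : ℕ) • e i

lemma eval_powCombination {σ R : Type*} [CommSemiring R] [DecidableEq R] {m : ℕ}
    (e : Fin m → MvPolynomial σ R) (x : σ → R) (c : R) :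
    eval x (powCombination e c) = (Polynomial.ofFn m fun i => eval x (e i)).eval c := by
  simp [powCombination, Polynomial.ofFn_eq_sum_monomial, Polynomial.eval_finsetSum, smul_eq_C_mul,
    mul_comm]

lemma totalDegree_powCombination_le {σ R : Type*} [CommSemiring R] {m d : ℕ}
    {e : Fin m → MvPolynomial σ R} (he : ∀ i, (e i).totalDegree ≤ d) (c : R) :
    (powCombination e c).totalDegree ≤ d :=
  (totalDegree_finsetSum _ _).trans <|
    Finset.sup_le fun i _ => (totalDegree_smul_le _ _).trans (he i)

variable {n m : ℕ} (e : Fin m → MvPolynomial (Fin n) ℂ)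

lemma iInter_hyp_subset_hyp_powCombination (c : ℂ) : ⋂ i, hyp (e i) ⊆ hyp (powCombination e c) := by
  intro x hx
  simp only [Set.mem_iInter, hyp, Set.mem_ofPred_eq] at hx
  simp [hyp, powCombination, hx]

lemma finite_setOf_mem_hyp_powCombination {x : Fin n → ℂˣ} (hx : x ∉ ⋂ i, hyp (e i)) :
    {c : ℂ | x ∈ hyp (powCombination e c)}.Finite := by
  classical
  obtain ⟨i, hi⟩ : ∃ i, x ∉ hyp (e i) := by simpa using hx
  have hp : Polynomial.ofFn m (fun i => eval (fun j => (x j : ℂ)) (e i)) ≠ 0 := by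
    rw [← map_zero (Polynomial.ofFn m), (Polynomial.injective_ofFn m).ne_iff]
    exact fun h => hi (congrFun h i)
  refine (Polynomial.finite_setOfPred_isRoot hp).subset fun c hc => ?_
  rw [Set.mem_ofPred_eq, Polynomial.IsRoot, ← eval_powCombination]
  exact hc

lemma exists_forall_torsionCoset_subset_hyp_powCombination :
    ∃ c : ℂ, ∀ C, IsTorsionCoset C → C ⊆ hyp (powCombination e c) → C ⊆ ⋂ i, hyp (e i) := by
  by_contra! h
  apply not_countable_complex
  refine Set.Countable.mono (fun c _ => ?_) <| (countable_setOf_isTorsionCoset n).biUnion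
    (t := fun C _ => {c : ℂ | C ⊆ hyp (powCombination e c) ∧ ¬C ⊆ ⋂ i, hyp (e i)}) ?_
  · obtain ⟨C, hC, hCc, hCV⟩ := h c
    exact Set.mem_biUnion hC ⟨hCc, hCV⟩
  · intro C _
    by_cases hCV : C ⊆ ⋂ i, hyp (e i)
    · simp [hCV]
    obtain ⟨x, hxC, hxV⟩ := Set.not_subset.mp hCV
    exact ((finite_setOf_mem_hyp_powCombination e hxV).subset fun c hc => hc.1 hxC).countable

lemma exists_isMaximalTorsionCoset_iInter_hyp_iff :
    ∃ c : ℂ, ∀ C, IsMaximalTorsionCoset (⋂ i, hyp (e i)) C ↔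
      IsMaximalTorsionCoset (hyp (powCombination e c)) C := by
  obtain ⟨c, hc⟩ := exists_forall_torsionCoset_subset_hyp_powCombination e
  exact ⟨c, fun C =>
    isMaximalTorsionCoset_iff_of_subset (iInter_hyp_subset_hyp_powCombination e c) hc⟩

end GenericCombination

section Bounds

open MvPolynomial

lemma hyp_X_sub_one {n : ℕ} (i : Fin n) :
    hyp (X i - 1 : MvPolynomial (Fin n) ℂ) = subgroupH (ℤ ∙ (Pi.single i 1 : Fin n → ℤ)) := by
  ext x
  rw [subgroupH_span_singleton, Set.mem_ofPred_eq, vpow_single, zpow_one, hyp, Set.mem_ofPred_eq,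
    map_sub, eval_X, map_one, sub_eq_zero, ← Units.val_one, Units.val_inj]

lemma one_le_of_forall_sum_T_le {n d t : ℕ} (hn : 0 < n) (hd : 1 ≤ d)
    (ht : ∀ f : MvPolynomial (Fin n) ℂ, f.totalDegree ≤ d → ∑ i ∈ Finset.range n, T n i f ≤ t) :
    1 ≤ t := by
  let i₀ : Fin n := ⟨0, hn⟩
  have hdeg : (X i₀ - 1 : MvPolynomial (Fin n) ℂ).totalDegree ≤ d :=
    (totalDegree_sub _ _).trans (by simpa using hd)
  have hH : hyp (X i₀ - 1 : MvPolynomial (Fin n) ℂ) ≠ Set.univ := by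
    intro h
    have : (-1 : Fin n → ℂˣ) ∈ hyp (X i₀ - 1) := h ▸ Set.mem_univ _
    norm_num [hyp] at this
  calc 1 = (maximalTorsionCosets (hyp (X i₀ - 1 : MvPolynomial (Fin n) ℂ))).ncard := by
        rw [maximalTorsionCosets_of_isTorsionCoset, Set.ncard_singleton]
        exact hyp_X_sub_one i₀ ▸ isTorsionCoset_subgroupH (isPrimitiveLattice_span_single i₀)
    _ ≤ ∑ i ∈ Finset.range n, T n i (X i₀ - 1) := ncard_maximalTorsionCosets_le_sum hH
    _ ≤ t := ht _ hdeg

end Bounds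

/-- Lemma 13 of the paper: `N_tor(n,d) ≤ T(n,d) · N_tor(n-1, n^{2+n}d²)`. -/
theorem stmt16 (n d : ℕ) (hn : 2 ≤ n) (hd : 1 ≤ d)
    (s : Finset (MvPolynomial (Fin n) ℂ)) (hs : ∀ f ∈ s, f.totalDegree ≤ d)
    (t : ℕ)
    (ht : ∀ f : MvPolynomial (Fin n) ℂ, f.totalDegree ≤ d →
      ∑ i ∈ Finset.range n, T n i f ≤ t)
    (N : ℕ)
    (hN : ∀ s' : Finset (MvPolynomial (Fin (n - 1)) ℂ),
      (∀ g ∈ s', g.totalDegree ≤ n ^ (2 + n) * d ^ 2) →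
      Set.ncard (maximalTorsionCosets
        {x : Fin (n - 1) → ℂˣ | ∀ g ∈ s', MvPolynomial.eval (fun j => (x j : ℂ)) g = 0}) ≤ N) :
    Set.ncard (maximalTorsionCosets
      {x : Fin n → ℂˣ | ∀ f ∈ s, MvPolynomial.eval (fun j => (x j : ℂ)) f = 0}) ≤ t * N := by
  have hN1 : 1 ≤ N := by simpa [maximalTorsionCosets_univ] using hN ∅ (by simp)
  have ht1 : 1 ≤ t := one_le_of_forall_sum_T_le (by omega) hd ht
  let e : Fin s.card → MvPolynomial (Fin n) ℂ := fun i => s.equivFin.symm i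
  have hV : {x : Fin n → ℂˣ | ∀ f ∈ s, MvPolynomial.eval (fun j => (x j : ℂ)) f = 0} =
      ⋂ i, hyp (e i) := by
    ext x
    simp only [Set.mem_iInter, hyp, Set.mem_ofPred_eq]
    exact ⟨fun hx i => hx _ (s.equivFin.symm i).2,
      fun hx f hf => by simpa [e] using hx (s.equivFin ⟨f, hf⟩)⟩
  rw [hV]
  by_cases hVuniv : ⋂ i, hyp (e i) = Set.univ
  · rw [hVuniv, maximalTorsionCosets_univ, Set.ncard_singleton]
    exact Nat.mul_le_mul ht1 hN1
  obtain ⟨c, hc⟩ := exists_isMaximalTorsionCoset_iInter_hyp_iff e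
  calc (maximalTorsionCosets (⋂ i, hyp (e i))).ncard
      ≤ ∑ i ∈ Finset.range n, T n i (powCombination e c) := by
        simpa only [T, hc] using ncard_maximalTorsionCosets_le_sum hVuniv
    _ ≤ t := ht _ (totalDegree_powCombination_le (fun i => hs _ (s.equivFin.symm i).2) c)
    _ ≤ t * N := Nat.le_mul_of_pos_right t hN1
end
end

section
/- Let g ∈ ℂ[X] be a polynomial in one variable with g(0) ≠ 0, and suppose that for every α ∈ ℂ with g(α) = 0, at least one of g(α²) = 0 or g(−α²) = 0 holds. Then every zero of g is a root of unity; that is, for every α ∈ ℂ with g(α) = 0 there exists an integer m ≥ 1 with α^m = 1. -/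
/-!
Iterating `x ↦ ±x²` inside the finite zero set of `g` produces zeros `β₀ = α, β₁, β₂, …` with
`βₙ² = α ^ 2 ^ (n + 1)`. Two of them coincide, so `α ^ 2 ^ (i + 1) = α ^ 2 ^ (j + 1)` for some
`i < j`, and `α ≠ 0` because `g(0) ≠ 0`.
-/

theorem exists_pow_eq_one_of_pow_eq_pow {M₀ : Type*} [MonoidWithZero M₀]
    [IsLeftCancelMulZero M₀] {x : M₀} (hx : x ≠ 0) {a b : ℕ} (hab : a < b) (h : x ^ a = x ^ b) :
    ∃ m, 1 ≤ m ∧ x ^ m = 1 :=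
  ⟨b - a, by omega, mul_left_cancel₀ (pow_ne_zero a hx) <| by
    rw [← pow_add, Nat.add_sub_cancel' hab.le, mul_one, h]⟩

theorem sq_iterate_eq_pow {M : Type*} [Monoid M] {f : M → M}
    (hf : ∀ x, f x ^ 2 = (x ^ 2) ^ 2) (x : M) (n : ℕ) : (f^[n] x) ^ 2 = x ^ 2 ^ (n + 1) := by
  induction n with
  | zero => simp
  | succ n ih => rw [Function.iterate_succ_apply', hf, ih, ← pow_mul, pow_succ 2 (n + 1)]

theorem exists_pow_eq_one_of_sq_or_neg_sq_mem {R : Type*} [Ring R] [IsDomain R] {S : Set R}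
    (hS : S.Finite) (h0 : 0 ∉ S) (hsq : ∀ x ∈ S, x ^ 2 ∈ S ∨ -x ^ 2 ∈ S) :
    ∀ x ∈ S, ∃ m, 1 ≤ m ∧ x ^ m = 1 := by
  classical
  intro x hx
  set f : R → R := fun y ↦ if y ^ 2 ∈ S then y ^ 2 else -y ^ 2
  have hf_sq : ∀ y, f y ^ 2 = (y ^ 2) ^ 2 := fun y ↦ by
    simp only [f]; split_ifs <;> simp
  have hf_maps : Set.MapsTo f S S := fun y hy ↦ by
    simp only [f]; split_ifs with h
    · exact h
    · exact (hsq y hy).resolve_left h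
  obtain ⟨i, j, hij, hfij⟩ :=
    hS.exists_lt_map_eq_of_forall_mem (f := fun n ↦ f^[n] x) fun n ↦ hf_maps.iterate n hx
  refine exists_pow_eq_one_of_pow_eq_pow (ne_of_mem_of_not_mem hx h0)
    (Nat.pow_lt_pow_right one_lt_two (Nat.succ_lt_succ hij)) ?_
  rw [← sq_iterate_eq_pow hf_sq, ← sq_iterate_eq_pow hf_sq, hfij]

/-- Lemma 1 (i) of Beukers–Smyth: if for each zero `α` of `g` one of `±α²` is also a zero
and `g(0) ≠ 0`, then all zeroes of `g` are roots of unity. -/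
theorem stmt18 (g : Polynomial ℂ) (h0 : g.eval 0 ≠ 0)
    (hsq : ∀ α : ℂ, g.eval α = 0 → g.eval (α ^ 2) = 0 ∨ g.eval (-(α ^ 2)) = 0) :
    ∀ α : ℂ, g.eval α = 0 → ∃ m : ℕ, 1 ≤ m ∧ α ^ m = 1 := by
  have hg : g ≠ 0 := by rintro rfl; exact h0 Polynomial.eval_zero
  exact exists_pow_eq_one_of_sq_or_neg_sq_mem (Polynomial.finite_setOfPred_isRoot hg) h0 hsq
end
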